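/- For every integer k ≥ 2, in the random k-tree process the expected number Y_k(n) = E[X_k(n)] of vertices of degree exactly k satisfies the recurrence Y_k(n+1) = 1 + (1 − k/(k·n − k² + 1))·Y_k(n) for all n ≥ k+2, together with the initial value Y_k(k+2) = 2. -/

import Mathlib

open MeasureTheory

/-- The complete graph on the vertices `0, …, m-1` inside `ℕ`. -/
def completeBelow (m : ℕ) : SimpleGraph ℕ :=
  SimpleGraph.fromRel (fun u v => u < m ∧ v < m)

/-- The graph obtained from `g` by joining the new vertex `n` to all vertices of `C`. -/
def extendGraph (g : SimpleGraph ℕ) (n : ℕ) (C : Finset ℕ) : SimpleGraph ℕ :=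
  SimpleGraph.fromRel (fun u v => g.Adj u v ∨ (u = n ∧ v ∈ C))

/-- The random `k`-tree process: `G (k+1)` is almost surely the complete graph on the
vertices `0, …, k` (representing `v₁, …, v_{k+1}`), and given `G n = g` (for `n ≥ k+1`),
a `k`-clique of `g` is chosen uniformly at random among all `k`-cliques of `g` and the
new vertex `n` (representing `v_{n+1}`) is joined to all of its `k` vertices. -/
structure IsRandomKTreeProcess (k : ℕ) {Ω : Type*} [MeasurableSpace Ω]
    (μ : Measure Ω) (G : ℕ → Ω → SimpleGraph ℕ) : Prop where
  meas : ∀ n (g : SimpleGraph ℕ), MeasurableSet {ω | G n ω = g}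
  init : μ {ω | G (k + 1) ω = completeBelow (k + 1)} = 1
  step : ∀ n, k + 1 ≤ n → ∀ g : SimpleGraph ℕ, ∀ C : Finset ℕ, g.IsNClique k C →
    μ {ω | G n ω = g ∧ G (n + 1) ω = extendGraph g n C}
      = μ {ω | G n ω = g} / ({D : Finset ℕ | g.IsNClique k D}.ncard : ENNReal)

/-- `degCount g n d` is the number of vertices of degree `d` in the graph `g` whose
vertex set is `{0, …, n-1}`. -/
noncomputable def degCount (g : SimpleGraph ℕ) (n d : ℕ) : ℕ :=
  {v : ℕ | v < n ∧ (g.neighborSet v).ncard = d}.ncard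

/-!
A graph reachable at time `n ≥ k + 1` is a `k`-tree on `{0, …, n-1}`: it has `k n - k² + 1`
cliques of size `k`, all its vertices have degree at least `k`, and the neighbourhood of a vertex
of degree `k` is a `k`-clique, so such a vertex lies in exactly `k` of the `k`-cliques. Joining the
new vertex `n` to a `k`-clique `C` creates one vertex of degree `k` and raises the degree of every
vertex of `C`; double counting therefore gives `∑_C X_k(g + C) = N (X_k(g) + 1) - k X_k(g)` where
`N = k n - k² + 1`. Averaging over the uniformly chosen `C`, and then over the finitely many
reachable graphs, gives the recurrence for every `n ≥ k + 1`; at `n = k + 1` the graph is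
`K_{k+1}`, whose `k + 1` vertices all have degree `k`, and the recurrence yields the value `2`.
-/

open Finset

namespace SimpleGraph

variable {V : Type*} [DecidableEq V] {G : SimpleGraph V}

theorem isNClique_iff_erase_mem_powersetCard {k : ℕ} (hk : 1 ≤ k) {v : V} {D E : Finset V}
    (hD : G.IsClique (D : Set V)) (hN : G.neighborSet v = D) (hvE : v ∈ E) :
    G.IsNClique k E ↔ E.erase v ∈ D.powersetCard (k - 1) := by
  rw [mem_powersetCard]
  constructor
  · intro hE
    refine ⟨fun x hx => ?_, by rw [card_erase_of_mem hvE, hE.card_eq]⟩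
    obtain ⟨hxv, hxE⟩ := mem_erase.mp hx
    have : G.Adj v x := hE.isClique hvE hxE (Ne.symm hxv)
    rwa [← mem_coe, ← hN]
  · rintro ⟨hsub, hcard⟩
    rw [← insert_erase hvE]
    have hclique : G.IsNClique (k - 1) (E.erase v) := ⟨hD.subset (by exact_mod_cast hsub), hcard⟩
    refine Nat.sub_add_cancel hk ▸ hclique.insert fun x hx => ?_
    have : x ∈ (D : Set V) := hsub hx
    rwa [← hN] at this

theorem card_filter_mem_eq_of_neighborSet_eq {k : ℕ} (hk : 1 ≤ k) {v : V} {D : Finset V}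
    (hD : G.IsNClique k D) (hN : G.neighborSet v = D) (cliques : Finset (Finset V))
    (hcliques : ∀ E, E ∈ cliques ↔ G.IsNClique k E) :
    #{E ∈ cliques | v ∈ E} = k := by
  have hvD : v ∉ D := fun h => G.irrefl (by rwa [← mem_coe, ← hN] at h)
  have : {E ∈ cliques | v ∈ E} = (D.powersetCard (k - 1)).image (insert v) := by
    ext E
    simp only [mem_filter, mem_image]
    constructor
    · rintro ⟨hE, hvE⟩
      refine ⟨E.erase v, ?_, insert_erase hvE⟩
      exact (isNClique_iff_erase_mem_powersetCard hk hD.isClique hN hvE).mp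
        ((hcliques E).mp hE)
    · rintro ⟨S, hS, rfl⟩
      have hvS : v ∉ S := fun h => hvD ((mem_powersetCard.mp hS).1 h)
      have hv := mem_insert_self v S
      refine ⟨(hcliques _).mpr ?_, hv⟩
      rwa [isNClique_iff_erase_mem_powersetCard hk hD.isClique hN hv, erase_insert hvS]
  rw [this, card_image_of_injOn, card_powersetCard, hD.card_eq]
  · obtain ⟨j, rfl⟩ := Nat.exists_eq_add_of_le' hk
    simp [Nat.choose_succ_self_right]
  · intro S hS T hT hST
    simp only [mem_coe, mem_powersetCard] at hS hT
    rw [← erase_insert (fun h => hvD (hS.1 h)), ← erase_insert (fun h => hvD (hT.1 h))]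
    exact congrArg (·.erase v) hST

end SimpleGraph

section

variable {g : SimpleGraph ℕ} {k n u v : ℕ} {C D : Finset ℕ}

theorem completeBelow_adj : (completeBelow n).Adj u v ↔ u ≠ v ∧ u < n ∧ v < n := by
  simp only [completeBelow, SimpleGraph.fromRel_adj]
  tauto

theorem extendGraph_adj :
    (extendGraph g n C).Adj u v ↔ u ≠ v ∧ (g.Adj u v ∨ (u = n ∧ v ∈ C) ∨ (v = n ∧ u ∈ C)) := by
  have := g.adj_comm u v
  simp only [extendGraph, SimpleGraph.fromRel_adj]
  tauto

theorem le_extendGraph : g ≤ extendGraph g n C :=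
  fun _ _ h => extendGraph_adj.mpr ⟨h.ne, Or.inl h⟩

theorem extendGraph_adj_of_ne (hu : u ≠ n) (hv : v ≠ n) :
    (extendGraph g n C).Adj u v ↔ g.Adj u v := by
  rw [extendGraph_adj]
  exact ⟨by rintro ⟨-, h | ⟨rfl, -⟩ | ⟨rfl, -⟩⟩ <;> trivial, fun h => ⟨h.ne, Or.inl h⟩⟩

theorem neighborSet_extendGraph_self (hn : n ∉ g.support) (hnC : n ∉ C) :
    (extendGraph g n C).neighborSet n = C := by
  ext u
  simp only [SimpleGraph.mem_neighborSet, extendGraph_adj, mem_coe]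
  refine ⟨?_, fun hu => ⟨fun h => hnC (h ▸ hu), Or.inr (Or.inl ⟨trivial, hu⟩)⟩⟩
  rintro ⟨hne, h | ⟨-, hu⟩ | ⟨rfl, -⟩⟩
  exacts [absurd ⟨u, h⟩ hn, hu, absurd rfl hne]

theorem neighborSet_extendGraph_of_mem (hnC : n ∉ C) (hv : v ∈ C) :
    (extendGraph g n C).neighborSet v = insert n (g.neighborSet v) := by
  have hvn : v ≠ n := fun h => hnC (h ▸ hv)
  ext u
  simp only [SimpleGraph.mem_neighborSet, extendGraph_adj, Set.mem_insert_iff]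
  refine ⟨?_, ?_⟩
  · rintro ⟨-, h | ⟨rfl, -⟩ | ⟨rfl, -⟩⟩
    exacts [Or.inr h, absurd rfl hvn, Or.inl rfl]
  · rintro (rfl | h)
    exacts [⟨hvn, Or.inr (Or.inr ⟨rfl, hv⟩)⟩, ⟨h.ne, Or.inl h⟩]

theorem neighborSet_extendGraph_of_notMem (hvn : v ≠ n) (hvC : v ∉ C) :
    (extendGraph g n C).neighborSet v = g.neighborSet v := by
  ext u
  simp only [SimpleGraph.mem_neighborSet, extendGraph_adj]
  refine ⟨?_, fun h => ⟨h.ne, Or.inl h⟩⟩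
  rintro ⟨-, h | ⟨rfl, -⟩ | ⟨rfl, hv⟩⟩
  exacts [h, absurd rfl hvn, absurd hv hvC]

theorem isNClique_extendGraph_iff_of_notMem (hnD : n ∉ D) :
    (extendGraph g n C).IsNClique k D ↔ g.IsNClique k D := by
  refine ⟨fun hD => ⟨fun x hx y hy hxy => ?_, hD.card_eq⟩, (·.mono le_extendGraph)⟩
  exact (extendGraph_adj_of_ne (by rintro rfl; exact hnD hx) (by rintro rfl; exact hnD hy)).mp
    (hD.isClique hx hy hxy)

theorem extendGraph_injOn (hn : n ∉ g.support) : Set.InjOn (extendGraph g n) {C | n ∉ C} :=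
  fun C hC C' hC' h => by
    simpa using (neighborSet_extendGraph_self hn hC).symm.trans
      ((congrArg (·.neighborSet n) h).trans (neighborSet_extendGraph_self hn hC'))

theorem support_extendGraph_subset (hg : g.support ⊆ Set.Iio n) (hC : C ⊆ range n) :
    (extendGraph g n C).support ⊆ Set.Iio (n + 1) := by
  rintro u ⟨v, huv⟩
  simp only [Set.mem_Iio]
  rcases (extendGraph_adj.mp huv).2 with h | ⟨rfl, -⟩ | ⟨-, hu⟩
  · exact (hg ⟨v, h⟩).trans (Nat.lt_succ_self n)
  · exact Nat.lt_succ_self u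
  · exact Nat.lt_succ_of_lt (mem_range.mp (hC hu))

theorem SimpleGraph.IsNClique.subset_range (hk : 2 ≤ k) (hg : g.support ⊆ Set.Iio n)
    (hC : g.IsNClique k C) : C ⊆ range n := by
  intro x hx
  obtain ⟨y, hy, hyx⟩ := exists_mem_ne (hC.card_eq ▸ hk : 1 < #C) x
  exact mem_range.mpr (hg ⟨y, hC.isClique hx hy hyx.symm⟩)

noncomputable def cliquesBelow (k : ℕ) (g : SimpleGraph ℕ) (n : ℕ) : Finset (Finset ℕ) :=
  open Classical in {C ∈ (range n).powersetCard k | g.IsNClique k C}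

theorem mem_cliquesBelow : C ∈ cliquesBelow k g n ↔ C ⊆ range n ∧ g.IsNClique k C := by
  classical
  simp only [cliquesBelow, mem_filter, mem_powersetCard]
  exact ⟨fun h => ⟨h.1.1, h.2⟩, fun h => ⟨⟨h.1, h.2.card_eq⟩, h.2⟩⟩

theorem mem_cliquesBelow_iff (hk : 2 ≤ k) (hg : g.support ⊆ Set.Iio n) :
    C ∈ cliquesBelow k g n ↔ g.IsNClique k C :=
  mem_cliquesBelow.trans ⟨And.right, fun h => ⟨h.subset_range hk hg, h⟩⟩

theorem coe_cliquesBelow (hk : 2 ≤ k) (hg : g.support ⊆ Set.Iio n) :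
    (cliquesBelow k g n : Set (Finset ℕ)) = {D | g.IsNClique k D} :=
  Set.ext fun _ => mem_cliquesBelow_iff hk hg

theorem card_cliquesBelow_extendGraph (hk : 2 ≤ k) (hg : g.support ⊆ Set.Iio n)
    (hC : g.IsNClique k C) :
    #(cliquesBelow k (extendGraph g n C) (n + 1)) = #(cliquesBelow k g n) + k := by
  have hCn := hC.subset_range hk hg
  have hnC : n ∉ C := fun h => notMem_range_self (hCn h)
  have hg' := support_extendGraph_subset hg hCn
  have hold : {D ∈ cliquesBelow k (extendGraph g n C) (n + 1) | n ∉ D} = cliquesBelow k g n := by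
    ext D
    simp only [mem_filter, mem_cliquesBelow_iff hk hg', mem_cliquesBelow_iff hk hg]
    constructor
    · rintro ⟨hD, hnD⟩
      exact (isNClique_extendGraph_iff_of_notMem hnD).mp hD
    · intro hD
      have hnD : n ∉ D := fun h => notMem_range_self (hD.subset_range hk hg h)
      exact ⟨(isNClique_extendGraph_iff_of_notMem hnD).mpr hD, hnD⟩
  have hnew : #{D ∈ cliquesBelow k (extendGraph g n C) (n + 1) | n ∈ D} = k :=
    SimpleGraph.card_filter_mem_eq_of_neighborSet_eq (by omega) (hC.mono le_extendGraph)
      (neighborSet_extendGraph_self (fun h => Set.self_notMem_Iio (hg h)) hnC) _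
      (fun _ => mem_cliquesBelow_iff hk hg')
  rw [← card_filter_add_card_filter_not (fun D => n ∈ D), hnew, hold, add_comm]

noncomputable def verticesOfDegree (g : SimpleGraph ℕ) (n d : ℕ) : Finset ℕ :=
  open Classical in {v ∈ range n | (g.neighborSet v).ncard = d}

theorem mem_verticesOfDegree {d : ℕ} :
    v ∈ verticesOfDegree g n d ↔ v < n ∧ (g.neighborSet v).ncard = d := by
  classical
  simp [verticesOfDegree]

theorem degCount_eq_card_verticesOfDegree (d : ℕ) :
    degCount g n d = #(verticesOfDegree g n d) := by
  rw [degCount, ← Set.ncard_coe_finset]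
  congr 1
  ext v
  simp [mem_verticesOfDegree]

theorem neighborSet_subset_Iio (hg : g.support ⊆ Set.Iio n) (v : ℕ) :
    g.neighborSet v ⊆ Set.Iio n :=
  fun _ hu => hg ⟨v, hu.symm⟩

theorem ncard_neighborSet_extendGraph_of_mem (hg : g.support ⊆ Set.Iio n) (hnC : n ∉ C)
    (hv : v ∈ C) :
    ((extendGraph g n C).neighborSet v).ncard = (g.neighborSet v).ncard + 1 := by
  have hn : n ∉ g.neighborSet v := fun h => Set.self_notMem_Iio (neighborSet_subset_Iio hg v h)
  rw [neighborSet_extendGraph_of_mem hnC hv,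
    Set.ncard_insert_of_notMem hn ((Set.finite_Iio n).subset (neighborSet_subset_Iio hg v))]

theorem verticesOfDegree_extendGraph (hk : 2 ≤ k) (hg : g.support ⊆ Set.Iio n)
    (hdeg : ∀ v < n, k ≤ (g.neighborSet v).ncard) (hC : g.IsNClique k C) :
    verticesOfDegree (extendGraph g n C) (n + 1) k = insert n (verticesOfDegree g n k \ C) := by
  have hCn := hC.subset_range hk hg
  have hnC : n ∉ C := fun h => notMem_range_self (hCn h)
  ext v
  simp only [mem_verticesOfDegree, mem_insert, mem_sdiff]
  rcases eq_or_ne v n with rfl | hvn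
  · simp [neighborSet_extendGraph_self (fun h => Set.self_notMem_Iio (hg h)) hnC, hC.card_eq]
  by_cases hvC : v ∈ C
  · have := hdeg v (mem_range.mp (hCn hvC))
    rw [ncard_neighborSet_extendGraph_of_mem hg hnC hvC]
    simp only [hvn, hvC, false_or, not_true_eq_false, and_false, iff_false]
    omega
  · rw [neighborSet_extendGraph_of_notMem hvn hvC]
    simp only [hvn, hvC, false_or, not_false_eq_true, and_true]
    omega

theorem degCount_extendGraph_add_card_inter (hk : 2 ≤ k) (hg : g.support ⊆ Set.Iio n)
    (hdeg : ∀ v < n, k ≤ (g.neighborSet v).ncard) (hC : g.IsNClique k C) :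
    degCount (extendGraph g n C) (n + 1) k + #(verticesOfDegree g n k ∩ C)
      = degCount g n k + 1 := by
  have hn : n ∉ verticesOfDegree g n k \ C := fun h =>
    lt_irrefl n (mem_verticesOfDegree.mp (mem_sdiff.mp h).1).1
  rw [degCount_eq_card_verticesOfDegree, degCount_eq_card_verticesOfDegree,
    verticesOfDegree_extendGraph hk hg hdeg hC, card_insert_of_notMem hn, add_right_comm,
    card_sdiff_add_card_inter]

theorem support_completeBelow_subset : (completeBelow n).support ⊆ Set.Iio n :=
  fun _ ⟨_, h⟩ => (completeBelow_adj.mp h).2.1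

theorem neighborSet_completeBelow (hv : v < n) :
    (completeBelow n).neighborSet v = ↑((range n).erase v) := by
  ext u
  simp only [SimpleGraph.mem_neighborSet, completeBelow_adj, coe_erase, coe_range,
    Set.mem_sdiff, Set.mem_Iio, Set.mem_singleton_iff]
  exact ⟨fun h => ⟨h.2.2, h.1.symm⟩, fun h => ⟨Ne.symm h.2, hv, h.1⟩⟩

theorem ncard_neighborSet_completeBelow (hv : v < n) :
    ((completeBelow n).neighborSet v).ncard = n - 1 := by
  rw [neighborSet_completeBelow hv, Set.ncard_coe_finset, card_erase_of_mem (mem_range.mpr hv),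
    card_range]

theorem degCount_completeBelow (d : ℕ) : degCount (completeBelow (d + 1)) (d + 1) d = d + 1 := by
  have : verticesOfDegree (completeBelow (d + 1)) (d + 1) d = range (d + 1) := by
    ext v
    rw [mem_verticesOfDegree, mem_range]
    exact ⟨And.left, fun hv => ⟨hv, ncard_neighborSet_completeBelow hv⟩⟩
  rw [degCount_eq_card_verticesOfDegree, this, card_range]

theorem cliquesBelow_completeBelow :
    cliquesBelow k (completeBelow n) n = (range n).powersetCard k := by
  ext C
  rw [mem_cliquesBelow, mem_powersetCard]
  refine ⟨fun h => ⟨h.1, h.2.card_eq⟩, fun h => ⟨h.1, ⟨fun x hx y hy hxy => ?_, h.2⟩⟩⟩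
  exact completeBelow_adj.mpr ⟨hxy, mem_range.mp (h.1 hx), mem_range.mp (h.1 hy)⟩

/-- The graphs that the random `k`-tree process can reach at time `n`. -/
inductive IsKTree (k : ℕ) : ℕ → SimpleGraph ℕ → Prop
  | complete : IsKTree k (k + 1) (completeBelow (k + 1))
  | extend {n : ℕ} {g : SimpleGraph ℕ} {C : Finset ℕ} :
      IsKTree k n g → g.IsNClique k C → IsKTree k (n + 1) (extendGraph g n C)

namespace IsKTree

theorem succ_le (h : IsKTree k n g) : k + 1 ≤ n := by
  induction h <;> omega

theorem eq_completeBelow (h : IsKTree k (k + 1) g) : g = completeBelow (k + 1) := by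
  cases h with
  | complete => rfl
  | extend h _ => exact absurd h.succ_le (Nat.not_succ_le_self k)

theorem support_subset (hk : 2 ≤ k) (h : IsKTree k n g) : g.support ⊆ Set.Iio n := by
  induction h with
  | complete => exact support_completeBelow_subset
  | extend _ hC ih => exact support_extendGraph_subset ih (hC.subset_range hk ih)

theorem le_ncard_neighborSet (hk : 2 ≤ k) (h : IsKTree k n g) :
    ∀ v < n, k ≤ (g.neighborSet v).ncard := by
  induction h with
  | complete =>
    intro v hv
    rw [ncard_neighborSet_completeBelow hv]
    omega
  | @extend n g C hg hC ih =>
    have hsupp := hg.support_subset hk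
    have hnC : n ∉ C := fun h => notMem_range_self (hC.subset_range hk hsupp h)
    intro v hv
    rcases eq_or_ne v n with rfl | hvn
    · rw [neighborSet_extendGraph_self (fun h => Set.self_notMem_Iio (hsupp h)) hnC,
        Set.ncard_coe_finset, hC.card_eq]
    by_cases hvC : v ∈ C
    · rw [ncard_neighborSet_extendGraph_of_mem hsupp hnC hvC]
      exact (ih v (by omega)).trans (Nat.le_succ _)
    · rw [neighborSet_extendGraph_of_notMem hvn hvC]
      exact ih v (by omega)

theorem isClique_neighborSet (hk : 2 ≤ k) (h : IsKTree k n g) :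
    ∀ v, (g.neighborSet v).ncard = k → g.IsClique (g.neighborSet v) := by
  induction h with
  | complete =>
    intro v _ x hx y hy hxy
    exact completeBelow_adj.mpr ⟨hxy, (completeBelow_adj.mp hx).2.2, (completeBelow_adj.mp hy).2.2⟩
  | @extend n g C hg hC ih =>
    have hsupp := hg.support_subset hk
    have hnC : n ∉ C := fun h => notMem_range_self (hC.subset_range hk hsupp h)
    intro v hv
    rcases eq_or_ne v n with rfl | hvn
    · rw [neighborSet_extendGraph_self (fun h => Set.self_notMem_Iio (hsupp h)) hnC]
      exact hC.isClique.mono le_extendGraph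
    by_cases hvC : v ∈ C
    · rw [ncard_neighborSet_extendGraph_of_mem hsupp hnC hvC] at hv
      have := hg.le_ncard_neighborSet hk v (mem_range.mp (hC.subset_range hk hsupp hvC))
      omega
    · rw [neighborSet_extendGraph_of_notMem hvn hvC] at hv ⊢
      exact (ih v hv).mono le_extendGraph

theorem card_cliquesBelow_add_sq (hk : 2 ≤ k) (h : IsKTree k n g) :
    #(cliquesBelow k g n) + k ^ 2 = k * n + 1 := by
  induction h with
  | complete =>
    rw [cliquesBelow_completeBelow, card_powersetCard, card_range, Nat.choose_succ_self_right]
    ring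
  | extend hg hC ih =>
    rw [card_cliquesBelow_extendGraph hk (hg.support_subset hk) hC]
    linarith

theorem card_cliquesBelow_pos (hk : 2 ≤ k) (h : IsKTree k n g) :
    0 < #(cliquesBelow k g n) := by
  have := h.card_cliquesBelow_add_sq hk
  have := Nat.mul_le_mul_left k h.succ_le
  nlinarith

theorem card_filter_mem_cliquesBelow (hk : 2 ≤ k) (h : IsKTree k n g)
    (hv : (g.neighborSet v).ncard = k) : #{C ∈ cliquesBelow k g n | v ∈ C} = k := by
  have hsupp := h.support_subset hk
  have hfin := (Set.finite_Iio n).subset (neighborSet_subset_Iio hsupp v)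
  have hD : g.IsNClique k hfin.toFinset :=
    ⟨by simpa using h.isClique_neighborSet hk v hv, by rwa [← Set.ncard_eq_toFinset_card _ hfin]⟩
  exact SimpleGraph.card_filter_mem_eq_of_neighborSet_eq (by omega) hD (by simp) _
    (fun _ => mem_cliquesBelow_iff hk hsupp)

theorem sum_degCount_extendGraph (hk : 2 ≤ k) (h : IsKTree k n g) :
    ∑ C ∈ cliquesBelow k g n, degCount (extendGraph g n C) (n + 1) k + k * degCount g n k
      = #(cliquesBelow k g n) * (degCount g n k + 1) := by
  have hsupp := h.support_subset hk
  have hinter : ∑ C ∈ cliquesBelow k g n, #(verticesOfDegree g n k ∩ C) = k * degCount g n k := by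
    rw [sum_card_inter fun v hv => h.card_filter_mem_cliquesBelow hk (mem_verticesOfDegree.mp hv).2,
      degCount_eq_card_verticesOfDegree, mul_comm]
  rw [← hinter, ← sum_add_distrib, ← smul_eq_mul, ← sum_const]
  refine sum_congr rfl fun C hC => ?_
  exact degCount_extendGraph_add_card_inter hk hsupp (h.le_ncard_neighborSet hk)
    ((mem_cliquesBelow_iff hk hsupp).mp hC)

theorem finite_setOf (hk : 2 ≤ k) (n : ℕ) : {g | IsKTree k n g}.Finite := by
  induction n with
  | zero => exact Set.finite_empty.subset fun g h => absurd h.succ_le (by omega)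
  | succ n ih =>
    refine ((ih.biUnion fun g₀ _ => (cliquesBelow k g₀ n).finite_toSet.image
      (extendGraph g₀ n)).insert (completeBelow (k + 1))).subset ?_
    rintro g (_ | @⟨_, g₀, C, h₀, hC⟩)
    · exact Set.mem_insert _ _
    · refine Set.mem_insert_of_mem _ (Set.mem_biUnion h₀ ⟨C, ?_, rfl⟩)
      exact (mem_cliquesBelow_iff hk (h₀.support_subset hk)).mpr hC

end IsKTree

theorem integral_eq_sum_of_pairwiseDisjoint {Ω ι : Type*} [MeasurableSpace Ω] {μ : Measure Ω}
    [IsProbabilityMeasure μ] {s : Finset ι} {B : ι → Set Ω} (hB : ∀ i ∈ s, MeasurableSet (B i))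
    (hdisj : (s : Set ι).PairwiseDisjoint B) (hsum : ∑ i ∈ s, μ (B i) = 1) {f : Ω → ℝ}
    {c : ι → ℝ} (hf : ∀ i ∈ s, ∀ ω ∈ B i, f ω = c i) :
    ∫ ω, f ω ∂μ = ∑ i ∈ s, μ.real (B i) * c i := by
  have hU := Finset.measurableSet_biUnion s hB
  have hae : ∀ᵐ ω ∂μ, ω ∈ ⋃ i ∈ s, B i := by
    rw [ae_mem_iff_measure_eq hU.nullMeasurableSet, measure_biUnion_finset hdisj hB, hsum,
      measure_univ]
  calc ∫ ω, f ω ∂μ = ∫ ω in ⋃ i ∈ s, B i, f ω ∂μ := by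
        rw [Measure.restrict_eq_self_of_ae_mem hae]
    _ = ∑ i ∈ s, ∫ ω in B i, f ω ∂μ := integral_biUnion_finset s hB hdisj fun i hi =>
      IntegrableOn.congr_fun integrableOn_const (fun ω hω => (hf i hi ω hω).symm) (hB i hi)
    _ = ∑ i ∈ s, μ.real (B i) * c i := sum_congr rfl fun i hi => by
      rw [setIntegral_congr_fun (hB i hi) (hf i hi), setIntegral_const, smul_eq_mul]

noncomputable def kTrees (hk : 2 ≤ k) (n : ℕ) : Finset (SimpleGraph ℕ) :=
  (IsKTree.finite_setOf hk n).toFinset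

theorem mem_kTrees {hk : 2 ≤ k} : g ∈ kTrees hk n ↔ IsKTree k n g :=
  Set.Finite.mem_toFinset _

theorem kTrees_succ_self (hk : 2 ≤ k) : kTrees hk (k + 1) = {completeBelow (k + 1)} := by
  ext g
  rw [mem_kTrees, mem_singleton]
  exact ⟨IsKTree.eq_completeBelow, fun h => h ▸ IsKTree.complete⟩

def transitionEvent {Ω : Type*} (G : ℕ → Ω → SimpleGraph ℕ) (n : ℕ) (g : SimpleGraph ℕ)
    (C : Finset ℕ) : Set Ω :=
  {ω | G n ω = g ∧ G (n + 1) ω = extendGraph g n C}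

noncomputable def kTreeTransitions (hk : 2 ≤ k) (n : ℕ) : Finset (Σ _ : SimpleGraph ℕ, Finset ℕ) :=
  (kTrees hk n).sigma fun g => cliquesBelow k g n

theorem pairwiseDisjoint_transitionEvent {Ω : Type*} {G : ℕ → Ω → SimpleGraph ℕ} (hk : 2 ≤ k)
    (n : ℕ) : Set.PairwiseDisjoint ↑(kTreeTransitions hk n)
      fun p : Σ _ : SimpleGraph ℕ, Finset ℕ => transitionEvent G n p.1 p.2 := by
  rintro ⟨g, C⟩ hp ⟨g', C'⟩ hp' hne
  refine Set.disjoint_left.mpr fun ω ⟨hg, hC⟩ ⟨hg', hC'⟩ => hne ?_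
  obtain rfl : g = g' := hg.symm.trans hg'
  simp only [kTreeTransitions, coe_sigma, Set.mem_sigma_iff, mem_coe, mem_kTrees, mem_cliquesBelow]
    at hp hp'
  have hsupp := hp.1.support_subset hk
  have hnC : ∀ {D : Finset ℕ}, D ⊆ range n → n ∉ D := fun hD h => notMem_range_self (hD h)
  rw [extendGraph_injOn (fun h => Set.self_notMem_Iio (hsupp h)) (hnC hp.2.1) (hnC hp'.2.1)
    (hC.symm.trans hC')]

namespace IsRandomKTreeProcess

variable {Ω : Type*} [MeasurableSpace Ω] {μ : Measure Ω} {G : ℕ → Ω → SimpleGraph ℕ}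

theorem measurableSet_transitionEvent (hG : IsRandomKTreeProcess k μ G) (n : ℕ)
    (g : SimpleGraph ℕ) (C : Finset ℕ) :
    MeasurableSet (transitionEvent G n g C) :=
  (hG.meas n g).inter (hG.meas (n + 1) _)

theorem measure_transitionEvent (hG : IsRandomKTreeProcess k μ G) (hk : 2 ≤ k)
    (hg : IsKTree k n g) (hC : g.IsNClique k C) :
    μ (transitionEvent G n g C) = μ {ω | G n ω = g} / #(cliquesBelow k g n) := by
  rw [transitionEvent, hG.step n hg.succ_le g C hC, ← coe_cliquesBelow hk (hg.support_subset hk),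
    Set.ncard_coe_finset]

theorem sum_measure_transitionEvent (hG : IsRandomKTreeProcess k μ G) (hk : 2 ≤ k)
    (hg : IsKTree k n g) :
    ∑ C ∈ cliquesBelow k g n, μ (transitionEvent G n g C) = μ {ω | G n ω = g} := by
  have hN : (#(cliquesBelow k g n) : ENNReal) ≠ 0 := by
    exact_mod_cast (hg.card_cliquesBelow_pos hk).ne'
  rw [sum_congr rfl fun C hC => hG.measure_transitionEvent hk hg
      ((mem_cliquesBelow_iff hk (hg.support_subset hk)).mp hC),
    sum_const, nsmul_eq_mul, ENNReal.mul_div_cancel hN (ENNReal.natCast_ne_top _)]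

theorem sum_measure_transitionEvent_kTreeTransitions (hG : IsRandomKTreeProcess k μ G) (hk : 2 ≤ k)
    (n : ℕ) :
    ∑ p ∈ kTreeTransitions hk n, μ (transitionEvent G n p.1 p.2)
      = ∑ g ∈ kTrees hk n, μ {ω | G n ω = g} := by
  rw [kTreeTransitions, sum_sigma]
  exact sum_congr rfl fun g hg => hG.sum_measure_transitionEvent hk (mem_kTrees.mp hg)

variable [IsProbabilityMeasure μ]

theorem sum_measure_eq_one (hG : IsRandomKTreeProcess k μ G) (hk : 2 ≤ k) (hn : k + 1 ≤ n) :
    ∑ g ∈ kTrees hk n, μ {ω | G n ω = g} = 1 := by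
  induction n, hn using Nat.le_induction with
  | base => rw [kTrees_succ_self, sum_singleton, hG.init]
  | succ n hn ih =>
    refine le_antisymm ?_ ?_
    · rw [← measure_biUnion_finset (f := fun g => {ω | G (n + 1) ω = g})
        (Set.pairwiseDisjoint_fiber _ _) fun g _ => hG.meas _ g]
      exact prob_le_one
    -- the transitions out of a reachable graph carry all of its mass and lead to reachable graphs
    calc 1 = ∑ p ∈ kTreeTransitions hk n, μ (transitionEvent G n p.1 p.2) := by
          rw [hG.sum_measure_transitionEvent_kTreeTransitions, ih]
      _ = μ (⋃ p ∈ kTreeTransitions hk n, transitionEvent G n p.1 p.2) :=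
        (measure_biUnion_finset (pairwiseDisjoint_transitionEvent hk n)
          fun p _ => hG.measurableSet_transitionEvent n p.1 p.2).symm
      _ ≤ μ (⋃ g ∈ kTrees hk (n + 1), {ω | G (n + 1) ω = g}) := by
        refine measure_mono ?_
        simp only [Set.subset_def, Set.mem_iUnion, kTreeTransitions, mem_sigma, mem_kTrees,
          exists_prop]
        rintro ω ⟨⟨g, C⟩, ⟨hg, hC⟩, -, hω⟩
        exact ⟨_, hg.extend ((mem_cliquesBelow_iff hk (hg.support_subset hk)).mp hC), hω⟩
      _ = _ := measure_biUnion_finset (f := fun g => {ω | G (n + 1) ω = g})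
        (Set.pairwiseDisjoint_fiber _ _) fun g _ => hG.meas _ g

theorem integral_comp_eq_sum (hG : IsRandomKTreeProcess k μ G) (hk : 2 ≤ k) (hn : k + 1 ≤ n)
    (φ : SimpleGraph ℕ → ℝ) :
    ∫ ω, φ (G n ω) ∂μ = ∑ g ∈ kTrees hk n, μ.real {ω | G n ω = g} * φ g :=
  integral_eq_sum_of_pairwiseDisjoint (fun g _ => hG.meas n g) (Set.pairwiseDisjoint_fiber _ _)
    (hG.sum_measure_eq_one hk hn) fun _ _ _ hω => congrArg φ hω

theorem integral_comp_succ_eq_sum (hG : IsRandomKTreeProcess k μ G) (hk : 2 ≤ k)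
    (hn : k + 1 ≤ n) (φ : SimpleGraph ℕ → ℝ) :
    ∫ ω, φ (G (n + 1) ω) ∂μ = ∑ g ∈ kTrees hk n, μ.real {ω | G n ω = g} /
      #(cliquesBelow k g n) * ∑ C ∈ cliquesBelow k g n, φ (extendGraph g n C) := by
  rw [integral_eq_sum_of_pairwiseDisjoint (c := fun p => φ (extendGraph p.1 n p.2))
    (fun p _ => hG.measurableSet_transitionEvent n p.1 p.2)
    (pairwiseDisjoint_transitionEvent hk n)
    (by rw [hG.sum_measure_transitionEvent_kTreeTransitions, hG.sum_measure_eq_one hk hn])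
    fun _ _ _ hω => congrArg φ hω.2, kTreeTransitions, sum_sigma]
  refine sum_congr rfl fun g hg => ?_
  have hg := mem_kTrees.mp hg
  rw [mul_sum]
  refine sum_congr rfl fun C hC => ?_
  rw [measureReal_def, hG.measure_transitionEvent hk hg
      ((mem_cliquesBelow_iff hk (hg.support_subset hk)).mp hC),
    ENNReal.toReal_div, ENNReal.toReal_natCast, measureReal_def]

theorem integral_degCount_succ (hG : IsRandomKTreeProcess k μ G) (hk : 2 ≤ k) (hn : k + 1 ≤ n) :
    ∫ ω, (degCount (G (n + 1) ω) (n + 1) k : ℝ) ∂μ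
      = 1 + (1 - (k : ℝ) / ((k : ℝ) * n - (k : ℝ) ^ 2 + 1)) *
          ∫ ω, (degCount (G n ω) n k : ℝ) ∂μ := by
  have hone := hG.integral_comp_eq_sum hk hn fun _ => (1 : ℝ)
  have hnext := hG.integral_comp_succ_eq_sum hk hn fun g => (degCount g (n + 1) k : ℝ)
  have hcur := hG.integral_comp_eq_sum hk hn fun g => (degCount g n k : ℝ)
  simp only [integral_const, probReal_univ, smul_eq_mul, mul_one] at hone hnext hcur
  set c := 1 - (k : ℝ) / ((k : ℝ) * n - (k : ℝ) ^ 2 + 1) with hc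
  rw [hnext, hcur, hone, mul_sum, ← sum_add_distrib]
  refine sum_congr rfl fun g hg => ?_
  have hg := mem_kTrees.mp hg
  have hN : (#(cliquesBelow k g n) : ℝ) = k * n - k ^ 2 + 1 := by
    have := congrArg (Nat.cast (R := ℝ)) (hg.card_cliquesBelow_add_sq hk)
    push_cast at this
    linarith
  have hsum := congrArg (Nat.cast (R := ℝ)) (hg.sum_degCount_extendGraph hk)
  push_cast at hsum
  have hpos : (#(cliquesBelow k g n) : ℝ) ≠ 0 := by exact_mod_cast (hg.card_cliquesBelow_pos hk).ne'
  rw [eq_sub_of_add_eq hsum, hc, ← hN]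
  field_simp
  ring

theorem integral_degCount_init (hG : IsRandomKTreeProcess k μ G) (hk : 2 ≤ k) :
    ∫ ω, (degCount (G (k + 1) ω) (k + 1) k : ℝ) ∂μ = k + 1 := by
  have h := hG.integral_comp_eq_sum hk le_rfl fun g => (degCount g (k + 1) k : ℝ)
  rw [kTrees_succ_self, sum_singleton, measureReal_def, hG.init, ENNReal.toReal_one, one_mul,
    degCount_completeBelow] at h
  exact_mod_cast h

end IsRandomKTreeProcess

end

/-- For every integer `k ≥ 2`, in the random `k`-tree process the expected number
`Y_k(n) = E[X_k(n)]` of vertices of degree exactly `k` satisfies the recurrence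
`Y_k(n+1) = 1 + (1 − k/(k·n − k² + 1))·Y_k(n)` for all `n ≥ k+2`, together with the
initial value `Y_k(k+2) = 2`. -/
theorem expected_degree_k_count_recurrence (k : ℕ) (hk : 2 ≤ k)
    {Ω : Type} [MeasurableSpace Ω] (μ : Measure Ω) [IsProbabilityMeasure μ]
    (G : ℕ → Ω → SimpleGraph ℕ) (hG : IsRandomKTreeProcess k μ G) :
    (∀ n : ℕ, k + 2 ≤ n →
      ∫ ω, (degCount (G (n + 1) ω) (n + 1) k : ℝ) ∂μ
        = 1 + (1 - (k : ℝ) / ((k : ℝ) * n - (k : ℝ) ^ 2 + 1)) *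
            ∫ ω, (degCount (G n ω) n k : ℝ) ∂μ) ∧
    ∫ ω, (degCount (G (k + 2) ω) (k + 2) k : ℝ) ∂μ = 2 := by
  refine ⟨fun n hn => hG.integral_degCount_succ hk (by omega), ?_⟩
  rw [hG.integral_degCount_succ hk le_rfl, hG.integral_degCount_init hk]
  push_cast
  field_simp
  ring
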